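/- Let n ≥ 1 and let g : ℝⁿ → [0, ∞) be locally integrable. Let x ∈ ℝⁿ, r > 0, and let ξ₁ ∈ B_r(x). Then for every y ∈ B_r(x) one has the pointwise localization inequality M g(y) ≤ max{ M^{2r}(χ_{B_{2r}(x)} g)(y), 3ⁿ · M g(ξ₁) }, where χ_{B_{2r}(x)} denotes the indicator function of the ball B_{2r}(x). -/

import Mathlib

/-!
For radii `ρ < r` the ball `B_ρ(y)` lies in `B_{2r}(x)`, where `g` and its truncation
agree, so the average over it is one of those in `M^{2r}(χ_{B_{2r}(x)} g)(y)`. For `ρ ≥ r`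
the ball `B_ρ(y)` lies in `B_{3ρ}(ξ₁)`, whose volume is `3ⁿ` times larger, so the average
over `B_ρ(y)` is at most `3ⁿ` times the average over `B_{3ρ}(ξ₁)`.
-/

open MeasureTheory Metric Set ENNReal

noncomputable section

/-- Fractional maximal function `M_α g`. -/
def fracMax {n : ℕ} (α : ℝ) (g : EuclideanSpace ℝ (Fin n) → ℝ≥0∞)
    (x : EuclideanSpace ℝ (Fin n)) : ℝ≥0∞ :=
  ⨆ ρ ∈ Set.Ioi (0 : ℝ),
    ENNReal.ofReal (ρ ^ α) * ((volume (ball x ρ))⁻¹ * ∫⁻ y in ball x ρ, g y)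

/-- Cut-off fractional maximal function `M_α^r g` (supremum over radii `0 < ρ < r`). -/
def fracMaxCut {n : ℕ} (α r : ℝ) (g : EuclideanSpace ℝ (Fin n) → ℝ≥0∞)
    (x : EuclideanSpace ℝ (Fin n)) : ℝ≥0∞ :=
  ⨆ ρ ∈ Set.Ioo (0 : ℝ) r,
    ENNReal.ofReal (ρ ^ α) * ((volume (ball x ρ))⁻¹ * ∫⁻ y in ball x ρ, g y)

theorem inv_measure_ball_mul_setLIntegral_le {E : Type*} [NormedAddCommGroup E]
    [NormedSpace ℝ E] [MeasurableSpace E] [BorelSpace E] [FiniteDimensional ℝ E]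
    (μ : Measure E) [μ.IsAddHaarMeasure] (f : E → ℝ≥0∞) {y z : E} {ρ c : ℝ} (hc : 0 < c)
    (hsub : ball y ρ ⊆ ball z (c * ρ)) :
    (μ (ball y ρ))⁻¹ * ∫⁻ w in ball y ρ, f w ∂μ ≤
      ENNReal.ofReal (c ^ Module.finrank ℝ E) *
        ((μ (ball z (c * ρ)))⁻¹ * ∫⁻ w in ball z (c * ρ), f w ∂μ) := by
  rw [Measure.addHaar_ball_mul_of_pos μ z hc, Measure.addHaar_ball_center μ y]
  have hK₀ : ENNReal.ofReal (c ^ Module.finrank ℝ E) ≠ 0 := by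
    rw [ne_eq, ENNReal.ofReal_eq_zero, not_le]; positivity
  rw [ENNReal.mul_inv (Or.inl hK₀) (Or.inl ofReal_ne_top), mul_assoc,
    ENNReal.mul_inv_cancel_left hK₀ ofReal_ne_top]
  gcongr

theorem ball_subset_ball_three_mul {X : Type*} [PseudoMetricSpace X] {x y ξ : X} {r ρ : ℝ}
    (hy : y ∈ ball x r) (hξ : ξ ∈ ball x r) (hrρ : r ≤ ρ) :
    ball y ρ ⊆ ball ξ (3 * ρ) := by
  refine ball_subset_ball' ?_
  have := dist_triangle_right y ξ x
  rw [mem_ball] at hy hξ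
  linarith

variable {n : ℕ}

theorem inv_measure_ball_mul_setLIntegral_le_fracMax_zero
    (g : EuclideanSpace ℝ (Fin n) → ℝ≥0∞) (x : EuclideanSpace ℝ (Fin n)) {ρ : ℝ}
    (hρ : 0 < ρ) :
    (volume (ball x ρ))⁻¹ * ∫⁻ y in ball x ρ, g y ≤ fracMax 0 g x :=
  le_iSup₂_of_le ρ hρ (by simp)

theorem inv_measure_ball_mul_setLIntegral_le_fracMaxCut_zero
    (g : EuclideanSpace ℝ (Fin n) → ℝ≥0∞) (x : EuclideanSpace ℝ (Fin n)) {r ρ : ℝ}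
    (hρ : ρ ∈ Ioo 0 r) :
    (volume (ball x ρ))⁻¹ * ∫⁻ y in ball x ρ, g y ≤ fracMaxCut 0 r g x :=
  le_iSup₂_of_le ρ hρ (by simp)

theorem fracMax_zero_le_iff (g : EuclideanSpace ℝ (Fin n) → ℝ≥0∞)
    (x : EuclideanSpace ℝ (Fin n)) (c : ℝ≥0∞) :
    fracMax 0 g x ≤ c ↔
      ∀ ρ > 0, (volume (ball x ρ))⁻¹ * ∫⁻ y in ball x ρ, g y ≤ c := by
  simp [fracMax]

theorem statement4_general (n : ℕ) (g : EuclideanSpace ℝ (Fin n) → ℝ)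
    (x ξ₁ : EuclideanSpace ℝ (Fin n)) (r : ℝ)
    (hξ₁ : ξ₁ ∈ ball x r) :
    ∀ y ∈ ball x r,
      fracMax 0 (fun z => ENNReal.ofReal (g z)) y ≤
        max
          (fracMaxCut 0 (2 * r)
            (fun z => ENNReal.ofReal (((ball x (2 * r)).indicator g) z)) y)
          ((3 : ℝ≥0∞) ^ n * fracMax 0 (fun z => ENNReal.ofReal (g z)) ξ₁) := by
  intro y hy
  refine (fracMax_zero_le_iff _ _ _).2 fun ρ hρ => ?_
  rcases lt_or_ge ρ r with hρr | hrρ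
  · refine le_max_of_le_left ?_
    have hsub : ball y ρ ⊆ ball x (2 * r) :=
      ball_subset_ball' (by linarith [mem_ball.1 hy])
    rw [setLIntegral_congr_fun measurableSet_ball fun z hz => by
      rw [← indicator_of_mem (hsub hz) g]]
    exact inv_measure_ball_mul_setLIntegral_le_fracMaxCut_zero _ _ ⟨hρ, by linarith⟩
  · refine le_max_of_le_right ?_
    calc _ ≤ ENNReal.ofReal (3 ^ n) * ((volume (ball ξ₁ (3 * ρ)))⁻¹ *
            ∫⁻ z in ball ξ₁ (3 * ρ), ENNReal.ofReal (g z)) := by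
          simpa only [finrank_euclideanSpace_fin] using inv_measure_ball_mul_setLIntegral_le
            volume _ three_pos (ball_subset_ball_three_mul hy hξ₁ hrρ)
      _ ≤ 3 ^ n * fracMax 0 (fun z => ENNReal.ofReal (g z)) ξ₁ := by
          rw [ENNReal.ofReal_pow zero_le_three, ENNReal.ofReal_ofNat]
          gcongr
          exact inv_measure_ball_mul_setLIntegral_le_fracMax_zero _ _ (by positivity)

theorem statement4 (n : ℕ) (hn : 1 ≤ n) (g : EuclideanSpace ℝ (Fin n) → ℝ)
    (hg0 : ∀ z, 0 ≤ g z) (hg : LocallyIntegrable g volume)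
    (x ξ₁ : EuclideanSpace ℝ (Fin n)) (r : ℝ) (hr : 0 < r)
    (hξ₁ : ξ₁ ∈ ball x r) :
    ∀ y ∈ ball x r,
      fracMax 0 (fun z => ENNReal.ofReal (g z)) y ≤
        max
          (fracMaxCut 0 (2 * r)
            (fun z => ENNReal.ofReal (((ball x (2 * r)).indicator g) z)) y)
          ((3 : ℝ≥0∞) ^ n * fracMax 0 (fun z => ENNReal.ofReal (g z)) ξ₁) :=
  statement4_general n g x ξ₁ r hξ₁
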